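/- Srinivas–Trivedi-type bound: Let (A,𝔪) be a Noetherian local ring of dimension d ≥ 1 and J an ideal generated by a system of parameters contained in 𝔪. Then the Hilbert function of A satisfies h_A(n) = λ(𝔪ⁿ/𝔪^{n+1}) ≤ λ(A/J)·C(n + d - 2, d - 1) + C(n + d - 2, d - 2) for all n ≥ 0. -/

import Mathlib

/-!
Multiplication by `x` gives an exact sequence `0 → A/(K : x) → A/K → A/(K + xA) → 0`. For
`K = I + 𝔪ⁿ⁺¹` and `x ∈ 𝔪` the colon ideal contains `I + 𝔪ⁿ`, so the step
`λ(A/(I + 𝔪ⁿ⁺¹)) - λ(A/(I + 𝔪ⁿ))` is at most `λ(A/(I + xA + 𝔪ⁿ⁺¹))`. Peeling off the parameters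
`a₁, …, a_d` one at a time and summing these steps, the bounds obey Pascal's rule, which produces
the binomial coefficients; for `I = 0` the step is `h_A(n)`.
-/

open Finset IsLocalRing Submodule

/-- With `I + (y₁, …, y_m)` of colength at most `ℓ`, `hilbertBound ℓ m n` bounds
`λ(A/(I + 𝔪ⁿ⁺¹))`; with `m + 1` elements `y` it bounds the step from `𝔪ⁿ` to `𝔪ⁿ⁺¹`. -/
def hilbertBound (ℓ : ℕ) : ℕ → ℕ → ℕ
  | _, 0 => 1
  | 0, _ + 1 => ℓ
  | m + 1, n + 1 => ℓ * (n + 1 + m).choose (m + 1) + (n + 1 + m).choose m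

theorem hilbertBound_succ_succ (ℓ m n : ℕ) :
    hilbertBound ℓ (m + 1) (n + 1) = hilbertBound ℓ (m + 1) n + hilbertBound ℓ m (n + 1) := by
  rcases m with _ | m <;> rcases n with _ | n
  · simp only [hilbertBound, Nat.choose_self, Nat.choose_zero_right]
    ring
  · simp only [hilbertBound, add_zero, zero_add, Nat.choose_one_right, Nat.choose_zero_right]
    ring
  · simp only [hilbertBound, zero_add, add_comm 1, Nat.choose_self, Nat.choose_succ_self_right]
    ring
  · simp only [hilbertBound, show n + 1 + 1 + (m + 1) = (n + 1 + m + 1) + 1 by ring,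
      show n + 1 + 1 + m = n + 1 + m + 1 by ring, Nat.choose_succ_succ' (n + 1 + m + 1),
      show n + 1 + (m + 1) = n + 1 + m + 1 by ring, Nat.choose_succ_succ' (n + 1 + m)]
    ring

theorem sum_range_hilbertBound (ℓ m N : ℕ) :
    ∑ n ∈ range (N + 1), hilbertBound ℓ m n = hilbertBound ℓ (m + 1) N := by
  induction N with
  | zero => simp [hilbertBound]
  | succ N ih => rw [sum_range_succ, ih, hilbertBound_succ_succ]

theorem hilbertBound_le (ℓ m n : ℕ) :
    hilbertBound ℓ m n ≤ ℓ * (n + m - 1).choose m + (n + m - 1).choose (m - 1) := by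
  rcases m with _ | m <;> rcases n with _ | n
  · simp [hilbertBound]
  · simp [hilbertBound]
  · simp [hilbertBound]
  · simp [hilbertBound, show n + 1 + (m + 1) - 1 = n + 1 + m by omega]

theorem le_add_sum_range_of_le_add {M : Type*} [AddCommMonoid M] [PartialOrder M]
    [IsOrderedAddMonoid M] {f g : ℕ → M} (h : ∀ n, f (n + 1) ≤ f n + g n) (N : ℕ) :
    f N ≤ f 0 + ∑ n ∈ range N, g n := by
  induction N with
  | zero => simp
  | succ N ih =>
    calc f (N + 1) ≤ f N + g N := h N
      _ ≤ f 0 + ∑ n ∈ range (N + 1), g n := by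
        rw [sum_range_succ, ← add_assoc]; gcongr

theorem Submodule.length_quotient_le_of_le {R M : Type*} [Ring R] [AddCommGroup M] [Module R M]
    {p p' : Submodule R M} (h : p ≤ p') : Module.length R (M ⧸ p') ≤ Module.length R (M ⧸ p) :=
  Module.length_le_of_surjective (factor h) (factor_surjective h)

theorem Submodule.length_quotient_eq_add_of_le {R M : Type*} [Ring R] [AddCommGroup M]
    [Module R M] {p p' : Submodule R M} (h : p ≤ p') :
    Module.length R (M ⧸ p) =
      Module.length R (p' ⧸ p.comap p'.subtype) + Module.length R (M ⧸ p') := by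
  refine Module.length_eq_add_of_exact (mapQ _ p p'.subtype le_rfl) (factor h) ?_
    (factor_surjective h) ?_
  · rw [← LinearMap.ker_eq_bot, ker_mapQ, mkQ_map_self]
  · rw [LinearMap.exact_iff]
    simp [factor, ker_mapQ, range_mapQ]

theorem Ideal.length_quotient_eq_colon_add_sup {A : Type*} [CommRing A] (K : Ideal A) (x : A) :
    Module.length A (A ⧸ K) =
      Module.length A (A ⧸ K.colon {x}) + Module.length A (A ⧸ (K ⊔ Ideal.span {x})) := by
  have hcolon : K.colon {x} ≤ Submodule.comap (LinearMap.toSpanSingleton A A x) K :=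
    fun _ ↦ mem_colon_singleton.mp
  refine Module.length_eq_add_of_exact (mapQ _ K _ hcolon) (factor le_sup_left) ?_
    (factor_surjective _) ?_
  · rw [← LinearMap.ker_eq_bot, ker_mapQ, ← le_bot_iff, Submodule.map_le_iff_le_comap,
      Submodule.comap_bot, ker_mkQ]
    exact fun _ ↦ mem_colon_singleton.mpr
  · rw [LinearMap.exact_iff]
    simp [factor, ker_mapQ, range_mapQ, ← LinearMap.span_singleton_eq_range]

theorem Ideal.length_quotient_sup_pow_succ_le {A : Type*} [CommRing A] (I 𝔞 : Ideal A) {x : A}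
    (hx : x ∈ 𝔞) (n : ℕ) :
    Module.length A (A ⧸ (I ⊔ 𝔞 ^ (n + 1))) ≤
      Module.length A (A ⧸ (I ⊔ Ideal.span {x} ⊔ 𝔞 ^ (n + 1))) +
        Module.length A (A ⧸ (I ⊔ 𝔞 ^ n)) := by
  have hcolon : I ⊔ 𝔞 ^ n ≤ (I ⊔ 𝔞 ^ (n + 1)).colon {x} := by
    refine sup_le (fun a ha ↦ ?_) (fun a ha ↦ ?_) <;> rw [mem_colon_singleton, smul_eq_mul]
    · exact Ideal.mem_sup_left (I.mul_mem_right x ha)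
    · exact Ideal.mem_sup_right (pow_succ 𝔞 n ▸ Ideal.mul_mem_mul ha hx)
  rw [length_quotient_eq_colon_add_sup _ x, sup_right_comm, add_comm]
  gcongr
  exact length_quotient_le_of_le hcolon

theorem Ideal.IsMaximal.length_quotient {A : Type*} [CommRing A] {𝔪 : Ideal A} (h𝔪 : 𝔪.IsMaximal) :
    Module.length A (A ⧸ 𝔪) = 1 :=
  have := isSimpleModule_iff_isCoatom.mpr (Ideal.isMaximal_def.mp h𝔪)
  Module.length_eq_one A (A ⧸ 𝔪)

section LocalRing

variable {A : Type*} [CommRing A] [IsLocalRing A]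

theorem IsLocalRing.length_quotient_sup_pow_succ_le_of_sup_span {ℓ m : ℕ} {I : Ideal A}
    (hI : I ≤ maximalIdeal A) {x : A} (hx : x ∈ maximalIdeal A)
    (h : ∀ n, Module.length A (A ⧸ (I ⊔ Ideal.span {x} ⊔ maximalIdeal A ^ (n + 2))) ≤
      hilbertBound ℓ m (n + 1)) (n : ℕ) :
    Module.length A (A ⧸ (I ⊔ maximalIdeal A ^ (n + 1))) ≤
      Module.length A (A ⧸ (I ⊔ maximalIdeal A ^ n)) + hilbertBound ℓ m n := by
  cases n with
  | zero =>
    rw [zero_add, pow_one, sup_eq_right.mpr hI, (maximalIdeal.isMaximal A).length_quotient]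
    exact le_add_self
  | succ n =>
    calc _ ≤ _ := Ideal.length_quotient_sup_pow_succ_le I _ hx (n + 1)
      _ ≤ hilbertBound ℓ m (n + 1) + Module.length A (A ⧸ (I ⊔ maximalIdeal A ^ (n + 1))) := by
        gcongr; exact h n
      _ = _ := add_comm _ _

theorem IsLocalRing.length_quotient_sup_pow_succ_le_hilbertBound (ℓ m : ℕ) {I : Ideal A}
    (hI : I ≤ maximalIdeal A) {y : Fin (m + 1) → A} (hy : ∀ i, y i ∈ maximalIdeal A)
    (hY : Module.length A (A ⧸ (I ⊔ Ideal.span (Set.range y))) ≤ ℓ) (n : ℕ) :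
    Module.length A (A ⧸ (I ⊔ maximalIdeal A ^ (n + 1))) ≤
      Module.length A (A ⧸ (I ⊔ maximalIdeal A ^ n)) + hilbertBound ℓ m n := by
  rw [Fin.range_fin_succ, Ideal.span_insert, ← sup_assoc] at hY
  induction m generalizing I n with
  | zero =>
    rw [Set.range_eq_empty, Ideal.span_empty, sup_bot_eq] at hY
    exact length_quotient_sup_pow_succ_le_of_sup_span hI (hy 0)
      (fun _ ↦ (length_quotient_le_of_le le_sup_left).trans hY) n
  | succ m ih =>
    have hI' : I ⊔ Ideal.span {y 0} ≤ maximalIdeal A :=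
      sup_le hI ((Ideal.span_singleton_le_iff_mem _).mpr (hy 0))
    rw [Fin.range_fin_succ, Ideal.span_insert, ← sup_assoc] at hY
    refine length_quotient_sup_pow_succ_le_of_sup_span hI (hy 0) (fun k ↦ ?_) n
    calc _ ≤ _ := le_add_sum_range_of_le_add
          (f := fun n ↦ Module.length A (A ⧸ (I ⊔ Ideal.span {y 0} ⊔ maximalIdeal A ^ n)))
          (ih hI' (fun i ↦ hy i.succ) hY) (k + 2)
      _ = hilbertBound ℓ (m + 1) (k + 1) := by
        simp [← Nat.cast_sum, sum_range_hilbertBound]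

end LocalRing

theorem stmt16_general (A : Type) [CommRing A] [IsLocalRing A]
    (d : ℕ) (hd : 1 ≤ d)
    (a : Fin d → A) (ha : ∀ i, a i ∈ IsLocalRing.maximalIdeal A)
    (J : Ideal A) (hJ : J = Ideal.span (Set.range a))
    (ℓ : ℕ) (hℓ : Order.krullDim (Submodule A (A ⧸ J)) = ((ℓ : ℕ∞) : WithBot ℕ∞))
    (h : ℕ → ℕ)
    (hh : ∀ n : ℕ, Order.krullDim (Submodule A
        ((IsLocalRing.maximalIdeal A ^ n : Ideal A) ⧸
          (Submodule.comap (IsLocalRing.maximalIdeal A ^ n : Ideal A).subtype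
            (IsLocalRing.maximalIdeal A ^ (n + 1)))))
      = ((h n : ℕ∞) : WithBot ℕ∞)) :
    ∀ n : ℕ, h n ≤ ℓ * Nat.choose (n + d - 2) (d - 1) + Nat.choose (n + d - 2) (d - 2) := by
  obtain ⟨m, rfl⟩ : ∃ m, d = m + 1 := ⟨d - 1, by omega⟩
  have hJℓ : Module.length A (A ⧸ (⊥ ⊔ Ideal.span (Set.range a))) ≤ ℓ := by
    rw [bot_sup_eq, ← hJ, ← WithBot.coe_le_coe, Module.coe_length, hℓ]
  have hinc : ∀ n, Module.length A (A ⧸ maximalIdeal A ^ (n + 1)) ≤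
      Module.length A (A ⧸ maximalIdeal A ^ n) + hilbertBound ℓ m n := by
    intro n
    have := length_quotient_sup_pow_succ_le_hilbertBound ℓ m bot_le ha hJℓ n
    rwa [bot_sup_eq, bot_sup_eq] at this
  intro n
  have hgr : Module.length A (A ⧸ maximalIdeal A ^ (n + 1)) =
      h n + Module.length A (A ⧸ maximalIdeal A ^ n) := by
    rw [length_quotient_eq_add_of_le (Ideal.pow_le_pow_right n.le_succ),
      WithBot.coe_injective ((Module.coe_length _ _).trans (hh n))]
  have hfin : Module.length A (A ⧸ maximalIdeal A ^ n) ≠ ⊤ := by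
    refine ne_top_of_le_ne_top ?_ (le_add_sum_range_of_le_add
      (f := fun n ↦ Module.length A (A ⧸ maximalIdeal A ^ n)) hinc n)
    simp [← Nat.cast_sum]
  have hle : (h n : ℕ∞) ≤ hilbertBound ℓ m n := by
    rw [← ENat.add_le_add_iff_right hfin, ← hgr]
    exact (hinc n).trans_eq (add_comm _ _)
  rw [show n + (m + 1) - 2 = n + m - 1 by omega, Nat.add_sub_cancel,
    show m + 1 - 2 = m - 1 by omega]
  exact (Nat.cast_le.mp hle).trans (hilbertBound_le ℓ m n)

/-- **Srinivas–Trivedi-type bound.** For a Noetherian local ring `(A,𝔪)` of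
dimension `d ≥ 1` and a parameter ideal `J ⊆ 𝔪`:
`λ(𝔪ⁿ/𝔪ⁿ⁺¹) ≤ λ(A/J)·C(n+d-2, d-1) + C(n+d-2, d-2)` for all `n ≥ 0`.
(Lengths are expressed as the Krull dimension of the submodule lattice.) -/
theorem stmt16 (A : Type) [CommRing A] [IsLocalRing A] [IsNoetherianRing A]
    (d : ℕ) (hd : 1 ≤ d) (hdim : ringKrullDim A = d)
    (a : Fin d → A) (ha : ∀ i, a i ∈ IsLocalRing.maximalIdeal A)
    (J : Ideal A) (hJ : J = Ideal.span (Set.range a))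
    (hsop : J.radical = IsLocalRing.maximalIdeal A)
    (ℓ : ℕ) (hℓ : Order.krullDim (Submodule A (A ⧸ J)) = ((ℓ : ℕ∞) : WithBot ℕ∞))
    (h : ℕ → ℕ)
    (hh : ∀ n : ℕ, Order.krullDim (Submodule A
        ((IsLocalRing.maximalIdeal A ^ n : Ideal A) ⧸
          (Submodule.comap (IsLocalRing.maximalIdeal A ^ n : Ideal A).subtype
            (IsLocalRing.maximalIdeal A ^ (n + 1)))))
      = ((h n : ℕ∞) : WithBot ℕ∞)) :
    ∀ n : ℕ, h n ≤ ℓ * Nat.choose (n + d - 2) (d - 1) + Nat.choose (n + d - 2) (d - 2) :=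
  stmt16_general A d hd a ha J hJ ℓ hℓ h hh
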